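/- For an arbitrary tuple S (i.e., an arbitrary deformation of the braid arrangement A_S) and every tree T ∈ T^(m)(n), the contribution of T satisfies r_S(T) ∈ {−1, 0, 1}. -/

import Mathlib

open scoped Classical

/-- The derived sets `S⁻ᵢⱼ` of nonnegative integers:
for `i < j`, `S⁻ᵢⱼ = {s ≥ 0 : -s ∈ Sᵢⱼ}`, and `S⁻ⱼᵢ = {0} ∪ {s > 0 : s ∈ Sᵢⱼ}`. -/
def Sminus {n : ℕ} (S : Fin n → Fin n → Finset ℤ) (i j : Fin n) : Set ℕ :=
  if i < j then {s : ℕ | -(s : ℤ) ∈ S i j}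
  else {0} ∪ {s : ℕ | 0 < s ∧ (s : ℤ) ∈ S j i}

/-- `m`: the maximal absolute value of an element of some `S i j` (`i < j`). -/
def mOf {n : ℕ} (S : Fin n → Fin n → Finset ℤ) : ℕ :=
  Finset.univ.sup fun p : Fin n × Fin n =>
    if p.1 < p.2 then (S p.1 p.2).sup (fun s => s.natAbs) else 0

/-- A rooted labeled plane tree with `n` nodes (labeled by `Fin n`, index `i` representing
the label `i+1`, so the node `1` is `(0 : Fin n)`), each node having exactly `m+1`
linearly ordered children; children that are not nodes are unlabeled leaves and carry no
further data. `parent v` is the parent node of the node `v` (with the convention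
`parent root = root`), and `pos v` is the position of `v` among the `m+1` children of its
parent, so `(pos v : ℕ)` is the number `lsib v` of left siblings of `v`. -/
structure PlaneTree (n m : ℕ) where
  root : Fin n
  parent : Fin n → Fin n
  pos : Fin n → Fin (m + 1)
  parent_root : parent root = root
  reaches_root : ∀ v : Fin n, ∃ k : ℕ, parent^[k] v = root
  pos_inj : ∀ v w : Fin n, v ≠ root → w ≠ root → parent v = parent w → pos v = pos w → v = w

namespace PlaneTree

variable {n m : ℕ}

/-- `v` is a child of `u` (among the nodes). -/
def IsChild (T : PlaneTree n m) (v u : Fin n) : Prop :=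
  v ≠ T.root ∧ T.parent v = u

/-- `v` is the cadet of `u`: the rightmost child of `u` that is a node. -/
def IsCadet (T : PlaneTree n m) (u v : Fin n) : Prop :=
  T.IsChild v u ∧ ∀ w : Fin n, T.IsChild w u → T.pos w ≤ T.pos v

/-- The number of left siblings of `v`. -/
def lsib (T : PlaneTree n m) (v : Fin n) : ℕ := (T.pos v : ℕ)

end PlaneTree

/-- `(v a, v (a+1), …, v b)` is a cadet sequence of `T` (1-indexed, `1 ≤ a ≤ b`). -/
def IsCadetWindow {n m : ℕ} (T : PlaneTree n m) (v : ℕ → Fin n) (a b : ℕ) : Prop :=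
  1 ≤ a ∧ a ≤ b ∧ ∀ p : ℕ, a < p → p ≤ b → T.IsCadet (v (p - 1)) (v p)

/-- `v` is injective on the indices `a, …, b`. -/
def WindowInj {n : ℕ} (v : ℕ → Fin n) (a b : ℕ) : Prop :=
  ∀ p q : ℕ, a ≤ p → p ≤ b → a ≤ q → q ≤ b → v p = v q → p = q

/-- `(v a, …, v b)` is an `S`-cadet sequence of `T`. -/
def IsSCadetWindow {n m : ℕ} (S : Fin n → Fin n → Finset ℤ) (T : PlaneTree n m)
    (v : ℕ → Fin n) (a b : ℕ) : Prop :=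
  IsCadetWindow T v a b ∧
    ∀ i j : ℕ, a ≤ i → i < j → j ≤ b →
      (∑ p ∈ Finset.Icc (i + 1) j, T.lsib (v p)) ∉ Sminus S (v i) (v j)

/-- `(v 1, …, v k)` is a maximal cadet sequence of `T`: all children of `v k` are
leaves, and no node has `v 1` as its cadet. -/
def IsMaxCadetSeq {n m : ℕ} (T : PlaneTree n m) (k : ℕ) (v : ℕ → Fin n) : Prop :=
  IsCadetWindow T v 1 k ∧ (∀ w : Fin n, ¬ T.IsChild w (v k)) ∧ ∀ u : Fin n, ¬ T.IsCadet u (v 1)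

/-- `(v a, …, v b)` is a maximal `S`-cadet sequence inside the ambient cadet sequence
`(v 1, …, v k)`. -/
def IsMaxSCadetWindow {n m : ℕ} (S : Fin n → Fin n → Finset ℤ) (T : PlaneTree n m)
    (k : ℕ) (v : ℕ → Fin n) (a b : ℕ) : Prop :=
  b ≤ k ∧ IsSCadetWindow S T v a b ∧
    (a = 1 ∨ ¬ IsSCadetWindow S T v (a - 1) b) ∧
    (b = k ∨ ¬ IsSCadetWindow S T v a (b + 1))

/-- `Y` is (the set of nodes of) a maximal `S`-cadet sequence of `T`. -/
def IsMaxSCadetSet {n m : ℕ} (S : Fin n → Fin n → Finset ℤ) (T : PlaneTree n m)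
    (Y : Finset (Fin n)) : Prop :=
  ∃ (k : ℕ) (v : ℕ → Fin n) (a b : ℕ), IsMaxCadetSeq T k v ∧ WindowInj v 1 k ∧
    IsMaxSCadetWindow S T k v a b ∧ Y = (Finset.Icc a b).image v

/-- `Y` is (the set of nodes of) a nonempty cadet sequence of `T`. -/
def IsCadetSeqSet {n m : ℕ} (T : PlaneTree n m) (Y : Finset (Fin n)) : Prop :=
  ∃ (k : ℕ) (v : ℕ → Fin n), IsCadetWindow T v 1 k ∧ WindowInj v 1 k ∧
    Y = (Finset.Icc 1 k).image v

/-- `X` is (the set of nodes of) an `S`-connected cadet sequence of `T`: it is a cadet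
sequence, every maximal `S`-cadet sequence is disjoint from it or contained in it, and no
cadet sequence with this property is properly contained in it. -/
def SConnected {n m : ℕ} (S : Fin n → Fin n → Finset ℤ) (T : PlaneTree n m)
    (X : Finset (Fin n)) : Prop :=
  IsCadetSeqSet T X ∧
    (∀ Y, IsMaxSCadetSet S T Y → X ∩ Y = ∅ ∨ Y ⊆ X) ∧
    ∀ X', IsCadetSeqSet T X' → (∀ Y, IsMaxSCadetSet S T Y → X' ∩ Y = ∅ ∨ Y ⊆ X') →
      X' ⊆ X → X' = X

/-- `Y` is (the set of nodes of) an `S`-cadet sequence of `T` (a possible box). -/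
def IsSBox {n m : ℕ} (S : Fin n → Fin n → Finset ℤ) (T : PlaneTree n m)
    (Y : Finset (Fin n)) : Prop :=
  ∃ (k : ℕ) (v : ℕ → Fin n), IsSCadetWindow S T v 1 k ∧ WindowInj v 1 k ∧
    Y = (Finset.Icc 1 k).image v

/-- `B` is an `S`-boxing of the set of nodes `X`: a partition of `X` into
`S`-cadet sequences. -/
def IsSBoxingOf {n m : ℕ} (S : Fin n → Fin n → Finset ℤ) (T : PlaneTree n m)
    (X : Finset (Fin n)) (B : Finset (Finset (Fin n))) : Prop :=
  (∀ Y ∈ B, IsSBox S T Y ∧ Y ⊆ X) ∧ ∀ u ∈ X, ∃! Y, Y ∈ B ∧ u ∈ Y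

/-- The contribution `r_S(X)` of a cadet sequence with (injective) node set `X`
(whose length is `X.card`): `∑_{B ∈ U_S(X)} (-1)^(|X| - |B|)`. -/
noncomputable def contrib {n m : ℕ} (S : Fin n → Fin n → Finset ℤ) (T : PlaneTree n m)
    (X : Finset (Fin n)) : ℤ :=
  ∑ B : Finset (Finset (Fin n)),
    if IsSBoxingOf S T X B then (-1 : ℤ) ^ (X.card - B.card) else 0

/-- The contribution `r_S(T) = ∑_{B ∈ U_S(T)} (-1)^(n - |B|)` of the tree `T`. -/
noncomputable def treeContrib {n m : ℕ} (S : Fin n → Fin n → Finset ℤ)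
    (T : PlaneTree n m) : ℤ :=
  contrib S T Finset.univ

/-- The tuple `S` is transitive. -/
def TransitiveS {n : ℕ} (S : Fin n → Fin n → Finset ℤ) : Prop :=
  ∀ i j k : Fin n, i ≠ j → j ≠ k → i ≠ k →
    ∀ s t : ℕ, s ∉ Sminus S i j → t ∉ Sminus S j k → s + t ∉ Sminus S i k

/-- The arrangement `A_S` is almost transitive (`(i : ℕ) = 0` encodes "`i` is the node `1`"). -/
def AlmostTransitive {n : ℕ} (S : Fin n → Fin n → Finset ℤ) : Prop :=
  ∀ i j k : Fin n, i ≠ j → j ≠ k → i ≠ k → (i : ℕ) ≠ 0 → (k : ℕ) ≠ 0 →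
    ∀ s t : ℕ, s ∉ Sminus S i j → t ∉ Sminus S j k → s + t ∉ Sminus S i k

/-- `A_S` is an Ish-type arrangement: `0 ∈ Sᵢⱼ` for all `i < j`, and `Sᵢⱼ = {0}`
whenever `1 < i < j`. -/
def IshType {n : ℕ} (S : Fin n → Fin n → Finset ℤ) : Prop :=
  (∀ i j : Fin n, i < j → (0 : ℤ) ∈ S i j) ∧
    ∀ i j : Fin n, 0 < (i : ℕ) → i < j → S i j = {0}

/-- `A_S` is a nested Ish arrangement. -/
def NestedIsh {n : ℕ} (S : Fin n → Fin n → Finset ℤ) : Prop :=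
  IshType S ∧ ∀ i j k : Fin n, (i : ℕ) = 0 → 0 < (j : ℕ) → j < k → S i j ⊆ S i k

/-- The lower inefficiency `E_l(T)`: the number of lower inefficient nodes of `T`,
i.e. nodes `w` that are left siblings of the node `1` with `lsib w ∉ S⁻_{w,1}`. -/
noncomputable def Elow {n m : ℕ} [NeZero n] (S : Fin n → Fin n → Finset ℤ)
    (T : PlaneTree n m) : ℕ :=
  (Finset.univ.filter fun w : Fin n =>
    w ≠ T.root ∧ (0 : Fin n) ≠ T.root ∧ T.parent w = T.parent 0 ∧ T.pos w < T.pos 0 ∧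
      T.lsib w ∉ Sminus S w 0).card

/-- The upper inefficiency `E_u(T)`: the number of upper inefficient nodes of `T`,
i.e. nodes `w` with parent the node `1` that are not the cadet of `1`, with
`lsib w ∉ S⁻_{1,w}`. -/
noncomputable def Eup {n m : ℕ} [NeZero n] (S : Fin n → Fin n → Finset ℤ)
    (T : PlaneTree n m) : ℕ :=
  (Finset.univ.filter fun w : Fin n =>
    T.IsChild w 0 ∧ ¬ T.IsCadet 0 w ∧ T.lsib w ∉ Sminus S 0 w).card

/-- The class `S(e_l, ℓ_l, e_u, ℓ_u)` of trees in `T^(m)(n)` with nonzero contribution,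
lower/upper inefficiencies `e_l, e_u` and lower/upper 1-lengths `ℓ_l, ℓ_u` (the latter
expressed via the maximal `S`-cadet sequence `{v_{j-ℓ_l}, …, v_j, …, v_{j+ℓ_u}}`
around the node `1 = v j` inside its maximal cadet sequence `(v 1, …, v t)`). -/
def ClassS {n : ℕ} [NeZero n] (S : Fin n → Fin n → Finset ℤ) (el ll eu lu : ℕ) :
    Set (PlaneTree n (mOf S)) :=
  {T | treeContrib S T ≠ 0 ∧ Elow S T = el ∧ Eup S T = eu ∧
    ∃ (t : ℕ) (v : ℕ → Fin n) (j : ℕ), IsMaxCadetSeq T t v ∧ WindowInj v 1 t ∧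
      1 ≤ j ∧ j ≤ t ∧ v j = 0 ∧ ll < j ∧ j + lu ≤ t ∧
      IsMaxSCadetWindow S T t v (j - ll) (j + lu)}

/-- The complement in `ℝ^n` of the union of the hyperplanes `xᵢ - xⱼ = s`
(`i < j`, `s ∈ S i j`) of the arrangement `A_S`. -/
def complementSet {n : ℕ} (S : Fin n → Fin n → Finset ℤ) : Set (Fin n → ℝ) :=
  {x | ∀ i j : Fin n, i < j → ∀ s ∈ S i j, x i - x j ≠ (s : ℝ)}

/-- The number of regions `r_S` of the arrangement `A_S`: the number of connected
components of the complement of its hyperplanes. -/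
noncomputable def numRegions {n : ℕ} (S : Fin n → Fin n → Finset ℤ) : ℕ :=
  Nat.card (ConnectedComponents ↥(complementSet S))

/-- A rooted labeled plane tree with `n` nodes and arbitrary numbers of children:
`nchild u` is the total number of (linearly ordered) children of the node `u`, and
`pos v` the position of the node `v` among the children of its parent (so
`lsib v = pos v` and `rsib v = nchild (parent v) - 1 - pos v`). Children not occupied
by nodes are unlabeled leaves. -/
structure LPTree (n : ℕ) where
  root : Fin n
  parent : Fin n → Fin n
  pos : Fin n → ℕ
  nchild : Fin n → ℕ
  parent_root : parent root = root
  reaches_root : ∀ v : Fin n, ∃ k : ℕ, parent^[k] v = root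
  pos_lt : ∀ v : Fin n, v ≠ root → pos v < nchild (parent v)
  pos_inj : ∀ v w : Fin n, v ≠ root → w ≠ root → parent v = parent w → pos v = pos w → v = w

/-- Membership in the set `𝔗(S)`: the root is the node `1`, the node `1` has `2m+2`
children, every other node has exactly one child, and every node `k ≠ 1` satisfies
`lsib k ∈ S⁻₁ₖ` or `rsib k ∈ S⁻ₖ₁`. -/
def IsFrakT {n : ℕ} [NeZero n] (S : Fin n → Fin n → Finset ℤ) (T : LPTree n) : Prop :=
  T.root = 0 ∧ T.nchild 0 = 2 * mOf S + 2 ∧ (∀ v : Fin n, v ≠ 0 → T.nchild v = 1) ∧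
    ∀ v : Fin n, v ≠ 0 →
      (T.pos v ∈ Sminus S 0 v ∨ (T.nchild (T.parent v) - 1 - T.pos v) ∈ Sminus S v 0)

/-- For an `S`-connected cadet sequence `(v 1, …, v k)` whose maximal `S`-cadet
sequences are the windows `[a r, b r]` (`1 ≤ r ≤ k'`, in increasing order of last index),
`LastIdx a b k' j` is the index of the largest-indexed node of `X_j \ X_{j+1}`
(with `X_{k'+1} = {0}` containing no node of the sequence). -/
def LastIdx (a b : ℕ → ℕ) (k' j : ℕ) : ℕ :=
  ((Finset.Icc (a j) (b j)) \
    (if j = k' then (∅ : Finset ℕ) else Finset.Icc (a (j + 1)) (b (j + 1)))).sup id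

/-- `X_i` reaches `X_j`: the parent of the largest-indexed node of `X_j \ X_{j+1}`
belongs to `X_i`, with the conventions `X_0 = {0}`, `parent (v 1) = 0`
(the index `0` plays the role of `X_0`). -/
def Reaches (a b : ℕ → ℕ) (k' i j : ℕ) : Prop :=
  i < j ∧ j ≤ k' ∧
    ((i = 0 ∧ LastIdx a b k' j = 1) ∨
      (1 ≤ i ∧ 2 ≤ LastIdx a b k' j ∧ a i ≤ LastIdx a b k' j - 1 ∧
        LastIdx a b k' j - 1 ≤ b i))

/-- A successful run of the algorithm: `idx 0 = 0`; at each step, the next term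
`idx (j+1)` is the smallest-indexed maximal `S`-cadet sequence reached by `X_{idx j}`
but not reached by any `X_{idx l}` with `l < j`; the run terminates at `k'`
after `t` steps. -/
def AlgRun (a b : ℕ → ℕ) (k' t : ℕ) (idx : ℕ → ℕ) : Prop :=
  idx 0 = 0 ∧ idx t = k' ∧ (∀ j, j < t → idx j ≠ k') ∧
    ∀ j, j < t →
      Reaches a b k' (idx j) (idx (j + 1)) ∧
        (∀ l, l < j → ¬ Reaches a b k' (idx l) (idx (j + 1))) ∧
        ∀ r, r < idx (j + 1) → Reaches a b k' (idx j) r → ∃ l, l < j ∧ Reaches a b k' (idx l) r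

/-- Condition (2) of Proposition 4.5 (with lower 1-length `i` and upper 1-length `k`),
for the maximal cadet sequence `(v 1, …, v t)` containing the node `1 = v j`. -/
def Cond9 {n m : ℕ} (S : Fin n → Fin n → Finset ℤ) (T : PlaneTree n m)
    (t : ℕ) (v : ℕ → Fin n) (j i k : ℕ) : Prop :=
  i < j ∧ k ≤ t - j ∧
    (∀ s : ℕ, 1 ≤ s → s ≤ t → (s < j - i - 1 ∨ j + k + 1 < s) →
      IsMaxSCadetWindow S T t v s s) ∧
    IsMaxSCadetWindow S T t v (j - i) (j + k) ∧
    (j - i ≠ 1 → IsMaxSCadetWindow S T t v (j - i - 1) (j - 1)) ∧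
    (j - i = 1 → i = 0) ∧
    (j + k ≠ t → IsMaxSCadetWindow S T t v (j + 1) (j + k + 1)) ∧
    (j + k = t → k = 0) ∧
    ∀ a' b' : ℕ, IsMaxSCadetWindow S T t v a' b' →
      ((a' = b' ∧ (a' < j - i - 1 ∨ j + k + 1 < a')) ∨ (a' = j - i ∧ b' = j + k) ∨
        (j - i ≠ 1 ∧ a' = j - i - 1 ∧ b' = j - 1) ∨ (j + k ≠ t ∧ a' = j + 1 ∧ b' = j + k + 1))

/-!
Induct over sets `X` of nodes containing, with any member, the node of which it is the cadet.
Let `u ∈ X` be a deepest node and `u = c₀, c₁, …, c_R` the cadet chain above it (`c_i` is the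
cadet of `c_{i+1}`). In a boxing of `X` the block of `u` is a segment `{c₀, …, c_a}`, and removing
it pairs the boxings of `X` with those of the rest. Applied to `X_b := X \ {c₀, …, c_{b-1}}`,
whose possible blocks through `c_b` are the segments `{c_b, …, c_{b+a}}` with `a ≤ M_b` (the
`S`-condition passes to subsegments), this gives `r(X_b) = ∑_{a ≤ M_b} (-1)^a r(X_{b+a+1})`.
For `h b = (-1)^b r(X_b)` the tail sums `P b = ∑_{e ≥ b} h e` then satisfy
`P b = P (b + M_b + 2)`, so they only take the values `0` and `h (R + 1)`. Hence
`r(X) = P 0 - P 1 ∈ {0, ±r(X \ {c₀, …, c_R})}`.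
-/

open Finset

theorem exists_filter_range_eq_range {N : ℕ} {P : ℕ → Prop} [DecidablePred P] (h0 : P 0)
    (hP : ∀ a ≤ N, P a → ∀ a' ≤ a, P a') :
    ∃ M ≤ N, (range (N + 1)).filter P = range (M + 1) := by
  have hM := Nat.findGreatest_le (P := P) N
  refine ⟨Nat.findGreatest P N, hM, ?_⟩
  ext a
  simp only [mem_filter, mem_range, Nat.lt_succ_iff]
  exact ⟨fun h => Nat.le_findGreatest h.1 h.2, fun h => ⟨h.trans hM,
    hP _ hM (Nat.findGreatest_spec (Nat.zero_le _) h0) a h⟩⟩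

theorem mem_of_alternating_recursion {R : Type*} [CommRing R] {N : ℕ} {M : ℕ → ℕ}
    {g : ℕ → R} (hM : ∀ b ≤ N, b + M b ≤ N)
    (hg : ∀ b ≤ N, g b = ∑ a ∈ range (M b + 1), (-1) ^ a * g (b + a + 1)) :
    g 0 ∈ ({0, g (N + 1), -g (N + 1)} : Set R) := by
  set h : ℕ → R := fun e => (-1) ^ e * g e
  set P : ℕ → R := fun b => ∑ e ∈ Ico b (N + 2), h e
  have hP : ∀ b ≤ N, P b = P (b + M b + 2) := by
    intro b hb
    have hhb : h b = -∑ e ∈ Ico (b + 1) (b + M b + 2), h e := by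
      rw [sum_Ico_eq_sum_range, show b + M b + 2 - (b + 1) = M b + 1 by omega, ← sum_neg_distrib]
      simp only [h, hg b hb, mul_sum]
      refine sum_congr rfl fun a _ => ?_
      rw [show b + 1 + a = b + a + 1 by omega, pow_succ, pow_add]
      ring
    have h1 : P b = h b + P (b + 1) := sum_eq_sum_Ico_succ_bot (by omega) h
    have h2 : P (b + 1) = (∑ e ∈ Ico (b + 1) (b + M b + 2), h e) + P (b + M b + 2) :=
      (sum_Ico_consecutive h (by omega) (by have := hM b hb; omega)).symm
    rw [h1, h2, hhb]
    ring
  have hPval : ∀ d b, b + d = N + 2 → P b = 0 ∨ P b = h (N + 1) := by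
    intro d
    induction d using Nat.strong_induction_on with
    | _ d ih =>
      intro b hbd
      rcases (show d = 0 ∨ d = 1 ∨ 2 ≤ d by omega) with rfl | rfl | hd
      · left; simp [P, show b = N + 2 by omega]
      · right; simp [P, show b = N + 1 by omega]
      · have hb := hM b (by omega)
        rw [hP b (by omega)]
        exact ih (N - b - M b) (by omega) _ (by omega)
  have h0 : g 0 = P 0 - P 1 := by
    simp [P, sum_eq_sum_Ico_succ_bot (show 0 < N + 2 by omega) h, h]
  have hN : h (N + 1) = g (N + 1) ∨ h (N + 1) = -g (N + 1) := by
    rcases neg_one_pow_eq_or R (N + 1) with e | e <;> simp [h, e]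
  simp only [Set.mem_insert_iff, Set.mem_singleton_iff, h0]
  rcases hPval (N + 2) 0 (by omega) with e0 | e0 <;>
    rcases hPval (N + 1) 1 (by omega) with e1 | e1 <;> rcases hN with e | e <;>
    simp [e0, e1, e]

namespace PlaneTree

variable {n m : ℕ} {T : PlaneTree n m}

theorem IsCadet.right_unique {u v v' : Fin n} (h : T.IsCadet u v)
    (h' : T.IsCadet u v') : v = v' :=
  T.pos_inj v v' h.1.1 h'.1.1 (h.1.2.trans h'.1.2.symm) (le_antisymm (h'.2 v h.1) (h.2 v' h'.1))

theorem IsCadet.left_unique {u u' v : Fin n} (h : T.IsCadet u v)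
    (h' : T.IsCadet u' v) : u = u' :=
  h.1.2.symm.trans h'.1.2

noncomputable def depth (T : PlaneTree n m) (v : Fin n) : ℕ := Nat.find (T.reaches_root v)

theorem IsChild.depth_eq {v u : Fin n} (h : T.IsChild v u) :
    T.depth v = T.depth u + 1 := by
  have hu : T.parent^[T.depth u] u = T.root := Nat.find_spec (T.reaches_root u)
  have hv : T.parent^[T.depth v] v = T.root := Nat.find_spec (T.reaches_root v)
  apply le_antisymm
  · exact Nat.find_min' _ (by rw [Function.iterate_succ_apply, h.2]; exact hu)
  · obtain ⟨d, hd⟩ : ∃ d, T.depth v = d + 1 :=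
      Nat.exists_eq_succ_of_ne_zero fun h0 => h.1 (by rwa [h0] at hv)
    rw [hd, Function.iterate_succ_apply, h.2] at hv
    rw [hd]
    exact Nat.succ_le_succ (Nat.find_min' _ hv)

def HasCadetParent (T : PlaneTree n m) (v : Fin n) : Prop := ∃ u, T.IsCadet u v

/-- The node of which `v` is the cadet; by convention `v` itself if there is none. -/
noncomputable def cadetParent (T : PlaneTree n m) (v : Fin n) : Fin n :=
  if h : T.HasCadetParent v then h.choose else v

theorem isCadet_cadetParent {v : Fin n} (h : T.HasCadetParent v) :
    T.IsCadet (T.cadetParent v) v := by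
  rw [cadetParent, dif_pos h]
  exact h.choose_spec

theorem IsCadet.cadetParent_eq {u v : Fin n} (h : T.IsCadet u v) : T.cadetParent v = u :=
  (isCadet_cadetParent ⟨u, h⟩).left_unique h

theorem depth_cadetParent_le (v : Fin n) : T.depth (T.cadetParent v) ≤ T.depth v := by
  by_cases h : T.HasCadetParent v
  · rw [(isCadet_cadetParent h).1.depth_eq]
    exact Nat.le_succ _
  · rw [cadetParent, dif_neg h]

noncomputable def cadetAncestor (T : PlaneTree n m) (u : Fin n) (i : ℕ) : Fin n :=
  T.cadetParent^[i] u

@[simp]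
theorem cadetAncestor_zero (T : PlaneTree n m) (u : Fin n) : T.cadetAncestor u 0 = u := rfl

theorem cadetAncestor_succ (T : PlaneTree n m) (u : Fin n) (i : ℕ) :
    T.cadetAncestor u (i + 1) = T.cadetParent (T.cadetAncestor u i) :=
  Function.iterate_succ_apply' _ _ _

theorem cadetAncestor_cadetAncestor (T : PlaneTree n m) (u : Fin n) (b i : ℕ) :
    T.cadetAncestor (T.cadetAncestor u b) i = T.cadetAncestor u (b + i) := by
  rw [cadetAncestor, cadetAncestor, cadetAncestor, ← Function.iterate_add_apply, Nat.add_comm]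

theorem depth_cadetAncestor_le (T : PlaneTree n m) (u : Fin n) (i : ℕ) :
    T.depth (T.cadetAncestor u i) ≤ T.depth u := by
  induction i with
  | zero => rfl
  | succ i ih => exact (T.cadetAncestor_succ u i ▸ depth_cadetParent_le _).trans ih

theorem exists_not_hasCadetParent_cadetAncestor (T : PlaneTree n m) (u : Fin n) :
    ∃ i, ¬ T.HasCadetParent (T.cadetAncestor u i) := by
  by_contra! h
  have key : ∀ i, T.depth (T.cadetAncestor u i) + i = T.depth u := by
    intro i
    induction i with
    | zero => rfl
    | succ i ih =>
      have := (isCadet_cadetParent (h i)).1.depth_eq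
      rw [cadetAncestor_succ]
      omega
  have := key (T.depth u + 1)
  omega

/-- The number of proper ancestors of `u` in the maximal cadet sequence through `u`. -/
noncomputable def cadetDepth (T : PlaneTree n m) (u : Fin n) : ℕ :=
  Nat.find (T.exists_not_hasCadetParent_cadetAncestor u)

theorem not_hasCadetParent_cadetAncestor_cadetDepth (T : PlaneTree n m) (u : Fin n) :
    ¬ T.HasCadetParent (T.cadetAncestor u (T.cadetDepth u)) :=
  Nat.find_spec (T.exists_not_hasCadetParent_cadetAncestor u)

theorem hasCadetParent_cadetAncestor {u : Fin n} {i : ℕ} (h : i < T.cadetDepth u) :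
    T.HasCadetParent (T.cadetAncestor u i) :=
  not_not.mp (Nat.find_min _ h)

theorem isCadet_cadetAncestor {u : Fin n} {i : ℕ} (h : i < T.cadetDepth u) :
    T.IsCadet (T.cadetAncestor u (i + 1)) (T.cadetAncestor u i) := by
  rw [cadetAncestor_succ]
  exact isCadet_cadetParent (hasCadetParent_cadetAncestor h)

theorem depth_cadetAncestor {u : Fin n} {i : ℕ} (h : i ≤ T.cadetDepth u) :
    T.depth (T.cadetAncestor u i) + i = T.depth u := by
  induction i with
  | zero => rfl
  | succ i ih =>
    rw [← ih (by omega), (isCadet_cadetAncestor (by omega : i < T.cadetDepth u)).1.depth_eq]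
    ring

theorem cadetAncestor_injOn (u : Fin n) :
    Set.InjOn (T.cadetAncestor u) (Set.Iic (T.cadetDepth u)) := by
  intro i hi j hj hij
  have hi' := depth_cadetAncestor hi
  have hj' := depth_cadetAncestor hj
  rw [hij] at *
  omega

theorem cadetDepth_cadetAncestor {u : Fin n} {b : ℕ} (h : b ≤ T.cadetDepth u) :
    T.cadetDepth (T.cadetAncestor u b) = T.cadetDepth u - b := by
  rw [cadetDepth, Nat.find_eq_iff]
  simp only [cadetAncestor_cadetAncestor, Nat.add_sub_cancel' h, not_not]
  exact ⟨T.not_hasCadetParent_cadetAncestor_cadetDepth u,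
    fun i hi => hasCadetParent_cadetAncestor (by omega)⟩

noncomputable def cadetSegment (T : PlaneTree n m) (u : Fin n) (a : ℕ) : Finset (Fin n) :=
  (range (a + 1)).image (T.cadetAncestor u)

theorem mem_cadetSegment {u x : Fin n} {a : ℕ} :
    x ∈ T.cadetSegment u a ↔ ∃ i ≤ a, T.cadetAncestor u i = x := by
  simp [cadetSegment]

theorem self_mem_cadetSegment (u : Fin n) (a : ℕ) : u ∈ T.cadetSegment u a :=
  mem_cadetSegment.mpr ⟨0, Nat.zero_le _, rfl⟩

theorem cadetSegment_zero (u : Fin n) : T.cadetSegment u 0 = {u} := by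
  simp [cadetSegment]

theorem card_cadetSegment {u : Fin n} {a : ℕ} (h : a ≤ T.cadetDepth u) :
    (T.cadetSegment u a).card = a + 1 := by
  rw [cadetSegment, card_image_of_injOn, card_range]
  exact (cadetAncestor_injOn u).mono fun i hi => by
    simp only [coe_range, Set.mem_Iio] at hi
    exact Set.mem_Iic.mpr (by omega)

theorem IsCadet.notMem_cadetSegment {u z : Fin n} (h : T.IsCadet u z) (a : ℕ) :
    z ∉ T.cadetSegment u a := by
  intro hz
  obtain ⟨i, -, rfl⟩ := mem_cadetSegment.mp hz
  have := h.1.depth_eq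
  have := T.depth_cadetAncestor_le u i
  omega

theorem cadetSegment_cadetAncestor (u : Fin n) (b a : ℕ) :
    T.cadetSegment (T.cadetAncestor u b) a = (Ico b (b + a + 1)).image (T.cadetAncestor u) := by
  ext x
  simp only [mem_cadetSegment, cadetAncestor_cadetAncestor, mem_image, mem_Ico]
  constructor
  · rintro ⟨i, hi, rfl⟩
    exact ⟨b + i, by omega, rfl⟩
  · rintro ⟨j, hj, rfl⟩
    exact ⟨j - b, by omega, by rw [Nat.add_sub_cancel' hj.1]⟩

def CadetClosed (T : PlaneTree n m) (X : Finset (Fin n)) : Prop :=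
  ∀ ⦃x z : Fin n⦄, T.IsCadet x z → z ∈ X → x ∈ X

theorem CadetClosed.cadetAncestor_mem {X : Finset (Fin n)} (hX : T.CadetClosed X) {u : Fin n}
    (hu : u ∈ X) (i : ℕ) : T.cadetAncestor u i ∈ X := by
  induction i with
  | zero => exact hu
  | succ i ih =>
    rw [cadetAncestor_succ]
    by_cases h : T.HasCadetParent (T.cadetAncestor u i)
    · exact hX (isCadet_cadetParent h) ih
    · rwa [cadetParent, dif_neg h]

theorem CadetClosed.cadetSegment_subset {X : Finset (Fin n)} (hX : T.CadetClosed X) {u : Fin n}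
    (hu : u ∈ X) (a : ℕ) : T.cadetSegment u a ⊆ X := fun _ hx => by
  obtain ⟨i, -, rfl⟩ := mem_cadetSegment.mp hx
  exact hX.cadetAncestor_mem hu i

theorem CadetClosed.sdiff_cadetAncestors {X : Finset (Fin n)} (hX : T.CadetClosed X) {u : Fin n}
    (hz : ∀ z, T.IsCadet u z → z ∉ X) {b : ℕ} (hb : b ≤ T.cadetDepth u + 1) :
    T.CadetClosed (X \ (range b).image (T.cadetAncestor u)) := by
  intro x z hxz hzX
  rw [mem_sdiff] at hzX ⊢
  refine ⟨hX hxz hzX.1, fun hx => ?_⟩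
  obtain ⟨i, hi, rfl⟩ := mem_image.mp hx
  rw [mem_range] at hi
  rcases i with _ | i
  · exact hz z hxz hzX.1
  · rw [← (isCadet_cadetAncestor (by omega : i < T.cadetDepth u)).right_unique hxz] at hzX
    exact hzX.2 (mem_image.mpr ⟨i, mem_range.mpr (by omega), rfl⟩)

end PlaneTree

open PlaneTree

section Windows

variable {n m : ℕ} {S : Fin n → Fin n → Finset ℤ} {T : PlaneTree n m} {v : ℕ → Fin n}
  {a b : ℕ}

theorem IsCadetWindow.cadetAncestor_last (h : IsCadetWindow T v a b) {i : ℕ} (hi : i ≤ b - a) :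
    T.cadetAncestor (v b) i = v (b - i) := by
  induction i with
  | zero => rfl
  | succ i ih =>
    rw [cadetAncestor_succ, ih (by omega), (h.2.2 (b - i) (by omega) (by omega)).cadetParent_eq,
      Nat.sub_sub]

theorem IsCadetWindow.le_cadetDepth (h : IsCadetWindow T v a b) : b - a ≤ T.cadetDepth (v b) := by
  by_contra! hlt
  have := h.2.1
  apply T.not_hasCadetParent_cadetAncestor_cadetDepth (v b)
  rw [h.cadetAncestor_last hlt.le]
  exact ⟨_, h.2.2 _ (by omega) (by omega)⟩

theorem IsCadetWindow.image_Icc (h : IsCadetWindow T v a b) :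
    (Icc a b).image v = T.cadetSegment (v b) (b - a) := by
  have := h.2.1
  ext x
  simp only [mem_image, mem_Icc, mem_cadetSegment]
  constructor
  · rintro ⟨p, hp, rfl⟩
    refine ⟨b - p, by omega, ?_⟩
    rw [h.cadetAncestor_last (by omega)]
    congr 1
    omega
  · rintro ⟨i, hi, rfl⟩
    exact ⟨b - i, by omega, (h.cadetAncestor_last hi).symm⟩

theorem IsCadetWindow.last_eq (h : IsCadetWindow T v a b) {y : Fin n}
    (hy : y ∈ (Icc a b).image v) (hz : ∀ z, T.IsCadet y z → z ∉ (Icc a b).image v) :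
    v b = y := by
  obtain ⟨p, hp, rfl⟩ := mem_image.mp hy
  rw [mem_Icc] at hp
  rcases hp.2.lt_or_eq with hpb | rfl
  · refine absurd (mem_image.mpr ⟨p + 1, mem_Icc.mpr ⟨by omega, hpb⟩, rfl⟩) (hz _ ?_)
    simpa using h.2.2 (p + 1) (by omega) hpb
  · rfl

theorem IsSCadetWindow.mono (h : IsSCadetWindow S T v a b) {a' b' : ℕ} (ha : a ≤ a')
    (hab : a' ≤ b') (hb : b' ≤ b) : IsSCadetWindow S T v a' b' :=
  ⟨⟨h.1.1.trans ha, hab, fun p hp hp' => h.1.2.2 p (by omega) (by omega)⟩,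
    fun i j hi hij hj => h.2 i j (by omega) hij (by omega)⟩

theorem IsSCadetWindow.isSBox_image_Icc (h : IsSCadetWindow S T v a b)
    (hinj : WindowInj v a b) : IsSBox S T ((Icc a b).image v) := by
  obtain ⟨⟨ha, hab, hcad⟩, hsum⟩ := h
  refine ⟨b + 1 - a, fun i => v (i + (a - 1)), ⟨⟨le_rfl, by omega, fun p hp hp' => ?_⟩,
    fun i j hi hij hj => ?_⟩, fun p q hp hp' hq hq' hpq => ?_, ?_⟩
  · simpa [show p + (a - 1) - 1 = p - 1 + (a - 1) by omega] using
      hcad (p + (a - 1)) (by omega) (by omega)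
  · have := hsum (i + (a - 1)) (j + (a - 1)) (by omega) (by omega) (by omega)
    rwa [show i + (a - 1) + 1 = i + 1 + (a - 1) by omega, ← map_add_right_Icc, sum_map] at this
  · have := hinj _ _ (by omega) (by omega) (by omega) (by omega) hpq
    omega
  · ext x
    simp only [mem_image, mem_Icc]
    constructor
    · rintro ⟨p, hp, rfl⟩
      exact ⟨p - (a - 1), by omega, by rw [Nat.sub_add_cancel (by omega)]⟩
    · rintro ⟨p, hp, rfl⟩
      exact ⟨p + (a - 1), by omega, rfl⟩

end Windows

section Boxings

variable {n m : ℕ} {S : Fin n → Fin n → Finset ℤ} {T : PlaneTree n m}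

theorem isSBox_singleton (S : Fin n → Fin n → Finset ℤ) (T : PlaneTree n m) (y : Fin n) :
    IsSBox S T {y} :=
  ⟨1, fun _ => y, ⟨⟨le_rfl, le_rfl, fun _ _ _ => by omega⟩, fun _ _ _ _ _ => by omega⟩,
    fun _ _ _ _ _ _ _ => by omega, by simp⟩

theorem IsSBox.nonempty {Y : Finset (Fin n)} (hY : IsSBox S T Y) : Y.Nonempty := by
  obtain ⟨k, v, hw, -, rfl⟩ := hY
  exact ⟨v 1, mem_image_of_mem v (mem_Icc.mpr ⟨le_rfl, hw.1.2.1⟩)⟩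

theorem IsSBox.exists_eq_cadetSegment {Y : Finset (Fin n)} {y : Fin n} (hY : IsSBox S T Y)
    (hy : y ∈ Y) (hz : ∀ z, T.IsCadet y z → z ∉ Y) :
    ∃ a ≤ T.cadetDepth y, Y = T.cadetSegment y a := by
  obtain ⟨k, v, hw, -, rfl⟩ := hY
  obtain rfl := hw.1.last_eq hy hz
  exact ⟨k - 1, hw.1.le_cadetDepth, hw.1.image_Icc⟩

theorem IsSBox.of_cadetSegment_le {y : Fin n} {a a' : ℕ}
    (h : IsSBox S T (T.cadetSegment y a)) (ha : a ≤ T.cadetDepth y) (ha' : a' ≤ a) :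
    IsSBox S T (T.cadetSegment y a') := by
  obtain ⟨k, v, hw, hinj, hY⟩ := h
  obtain rfl : v k = y := hw.1.last_eq (hY ▸ self_mem_cadetSegment y a)
    fun z hz => hY ▸ hz.notMem_cadetSegment a
  have hk : a = k - 1 := by
    have h1 := card_cadetSegment ha
    rw [hY, hw.1.image_Icc, card_cadetSegment hw.1.le_cadetDepth] at h1
    omega
  have hk1 := hw.1.2.1
  have hw' := hw.mono (a' := k - a') (b' := k) (by omega) (by omega) le_rfl
  rw [show a' = k - (k - a') by omega, ← hw'.1.image_Icc]
  exact hw'.isSBox_image_Icc fun p q hp hp' hq hq' => hinj p q (by omega) hp' (by omega) hq'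

theorem IsSBoxingOf.card_le {X : Finset (Fin n)} {B : Finset (Finset (Fin n))}
    (hB : IsSBoxingOf S T X B) : B.card ≤ X.card :=
  card_le_card_of_forall_subsingleton (fun Y x => x ∈ Y)
    (fun Y hY => let ⟨x, hx⟩ := (hB.1 Y hY).1.nonempty; ⟨x, (hB.1 Y hY).2 hx, hx⟩)
    (fun x hx _ hY₁ _ hY₂ => (hB.2 x hx).unique hY₁ hY₂)

theorem IsSBoxingOf.sdiff_erase {X P : Finset (Fin n)} {B : Finset (Finset (Fin n))}
    (hB : IsSBoxingOf S T X B) (hP : P ∈ B) : IsSBoxingOf S T (X \ P) (B.erase P) := by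
  refine ⟨fun Y hY => ?_, fun x hx => ?_⟩
  · have hYB := mem_of_mem_erase hY
    refine ⟨(hB.1 Y hYB).1, fun x hx => mem_sdiff.mpr ⟨(hB.1 Y hYB).2 hx, fun hxP => ?_⟩⟩
    exact ne_of_mem_erase hY ((hB.2 x ((hB.1 Y hYB).2 hx)).unique ⟨hYB, hx⟩ ⟨hP, hxP⟩)
  · rw [mem_sdiff] at hx
    obtain ⟨Z, ⟨hZB, hxZ⟩, huniq⟩ := hB.2 x hx.1
    exact ⟨Z, ⟨mem_erase.mpr ⟨fun e => hx.2 (e ▸ hxZ), hZB⟩, hxZ⟩,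
      fun Y hY => huniq Y ⟨mem_of_mem_erase hY.1, hY.2⟩⟩

theorem IsSBoxingOf.insert {X P : Finset (Fin n)} {B : Finset (Finset (Fin n))}
    (hB : IsSBoxingOf S T (X \ P) B) (hP : IsSBox S T P) (hPX : P ⊆ X) :
    IsSBoxingOf S T X (insert P B) := by
  refine ⟨fun Y hY => ?_, fun x hx => ?_⟩
  · rcases mem_insert.mp hY with rfl | hYB
    · exact ⟨hP, hPX⟩
    · exact ⟨(hB.1 Y hYB).1, (hB.1 Y hYB).2.trans sdiff_subset⟩
  by_cases hxP : x ∈ P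
  · refine ⟨P, ⟨mem_insert_self _ _, hxP⟩, fun Y ⟨hY, hxY⟩ => ?_⟩
    rcases mem_insert.mp hY with rfl | hYB
    · rfl
    · exact absurd hxP (mem_sdiff.mp ((hB.1 Y hYB).2 hxY)).2
  · obtain ⟨Z, ⟨hZB, hxZ⟩, huniq⟩ := hB.2 x (mem_sdiff.mpr ⟨hx, hxP⟩)
    refine ⟨Z, ⟨mem_insert_of_mem hZB, hxZ⟩, fun Y ⟨hY, hxY⟩ => ?_⟩
    rcases mem_insert.mp hY with rfl | hYB
    · exact absurd hxY hxP
    · exact huniq Y ⟨hYB, hxY⟩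

theorem contrib_empty (S : Fin n → Fin n → Finset ℤ) (T : PlaneTree n m) :
    contrib S T ∅ = 1 := by
  rw [contrib, sum_eq_single ∅ _ (by simp), if_pos ⟨by simp, by simp⟩]
  · simp
  intro B _ hB
  rw [if_neg]
  rintro ⟨hbox, -⟩
  obtain ⟨Y, hY⟩ := nonempty_iff_ne_empty.mpr hB
  obtain ⟨x, hx⟩ := (hbox Y hY).1.nonempty
  simpa using (hbox Y hY).2 hx

/-- The boxings of `X` having `P` as a block correspond to the boxings of `X \ P`. -/
theorem sum_boxings_of_mem {X P : Finset (Fin n)} (hP : IsSBox S T P) (hPX : P ⊆ X) :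
    ∑ B : Finset (Finset (Fin n)),
        (if P ∈ B ∧ IsSBoxingOf S T X B then (-1 : ℤ) ^ (X.card - B.card) else 0) =
      (-1) ^ (P.card - 1) * contrib S T (X \ P) := by
  obtain ⟨x, hx⟩ := hP.nonempty
  simp only [contrib, mul_sum, ← sum_filter]
  refine sum_bij' (fun B _ => B.erase P) (fun B _ => insert P B) (fun B hB => ?_)
    (fun B hB => ?_) (fun B hB => ?_) (fun B hB => ?_) (fun B hB => ?_) <;>
    simp only [mem_filter, mem_univ, true_and] at hB ⊢
  · exact hB.2.sdiff_erase hB.1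
  · exact ⟨mem_insert_self _ _, hB.insert hP hPX⟩
  · exact insert_erase hB.1
  · exact erase_insert fun hPB => (mem_sdiff.mp ((hB.1 P hPB).2 hx)).2 hx
  · have h1 := card_sdiff_of_subset hPX
    have h2 := card_erase_of_mem hB.1
    have h3 := (hB.2.sdiff_erase hB.1).card_le
    have h4 := card_le_card hPX
    have h5 := card_pos.mpr ⟨_, hB.1⟩
    have h6 := card_pos.mpr ⟨x, hx⟩
    rw [← pow_add]
    congr 1
    omega

theorem contrib_eq_sum_cadetSegment (S : Fin n → Fin n → Finset ℤ) {X : Finset (Fin n)}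
    (hX : T.CadetClosed X) {u : Fin n} (hu : u ∈ X) (hz : ∀ z, T.IsCadet u z → z ∉ X) :
    contrib S T X = ∑ a ∈ range (T.cadetDepth u + 1),
      if IsSBox S T (T.cadetSegment u a) then
        (-1) ^ a * contrib S T (X \ T.cadetSegment u a) else 0 := by
  have hblock : ∀ B, IsSBoxingOf S T X B →
      ∃! a, a ∈ range (T.cadetDepth u + 1) ∧ T.cadetSegment u a ∈ B := by
    intro B hB
    obtain ⟨Y, ⟨hYB, huY⟩, huniq⟩ := hB.2 u hu
    obtain ⟨a, ha, rfl⟩ := (hB.1 Y hYB).1.exists_eq_cadetSegment huY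
      fun z hzu hzY => hz z hzu ((hB.1 _ hYB).2 hzY)
    refine ⟨a, ⟨mem_range.mpr (by omega), hYB⟩, fun a' ⟨ha', ha'B⟩ => ?_⟩
    have h := congrArg card (huniq _ ⟨ha'B, self_mem_cadetSegment u a'⟩)
    rw [card_cadetSegment ha, card_cadetSegment (by simpa [Nat.lt_succ_iff] using ha')] at h
    omega
  calc contrib S T X
      = ∑ B : Finset (Finset (Fin n)), ∑ a ∈ range (T.cadetDepth u + 1),
          if T.cadetSegment u a ∈ B ∧ IsSBoxingOf S T X B then
            (-1 : ℤ) ^ (X.card - B.card) else 0 := by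
        refine sum_congr rfl fun B _ => ?_
        by_cases hB : IsSBoxingOf S T X B
        · obtain ⟨a, ⟨ha, haB⟩, huniq⟩ := hblock B hB
          rw [if_pos hB, sum_eq_single_of_mem a ha, if_pos ⟨haB, hB⟩]
          exact fun a' ha' hne => if_neg fun h => hne (huniq a' ⟨ha', h.1⟩)
        · simp [hB]
    _ = _ := by
        rw [sum_comm]
        refine sum_congr rfl fun a ha => ?_
        split_ifs with hbox
        · rw [sum_boxings_of_mem hbox (hX.cadetSegment_subset hu a),
            card_cadetSegment (by simpa [Nat.lt_succ_iff] using ha), Nat.add_sub_cancel]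
        · exact sum_eq_zero fun B _ => if_neg fun h => hbox (h.2.1 _ h.1).1

end Boxings

section Contribution

variable {n m : ℕ} {T : PlaneTree n m}

theorem contrib_sdiff_cadetAncestors (S : Fin n → Fin n → Finset ℤ) {X : Finset (Fin n)}
    (hX : T.CadetClosed X) {u : Fin n} (hu : u ∈ X) (hz : ∀ z, T.IsCadet u z → z ∉ X)
    {b : ℕ} (hb : b ≤ T.cadetDepth u) :
    contrib S T (X \ (range b).image (T.cadetAncestor u)) =
      ∑ a ∈ range (T.cadetDepth u - b + 1),
        if IsSBox S T (T.cadetSegment (T.cadetAncestor u b) a) then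
          (-1) ^ a * contrib S T (X \ (range (b + a + 1)).image (T.cadetAncestor u)) else 0 := by
  have hmem : T.cadetAncestor u b ∈ X \ (range b).image (T.cadetAncestor u) := by
    refine mem_sdiff.mpr ⟨hX.cadetAncestor_mem hu b, fun h => ?_⟩
    obtain ⟨i, hi, hib⟩ := mem_image.mp h
    rw [mem_range] at hi
    have := cadetAncestor_injOn u (Set.mem_Iic.mpr (by omega)) (Set.mem_Iic.mpr hb) hib
    omega
  have hz' : ∀ z, T.IsCadet (T.cadetAncestor u b) z →
      z ∉ X \ (range b).image (T.cadetAncestor u) := by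
    intro z hbz hzX
    rw [mem_sdiff] at hzX
    rcases b with _ | b
    · exact hz z hbz hzX.1
    · exact hzX.2 (mem_image.mpr ⟨b, mem_range.mpr (by omega),
        (isCadet_cadetAncestor (by omega)).right_unique hbz⟩)
  rw [contrib_eq_sum_cadetSegment S (hX.sdiff_cadetAncestors hz (by omega)) hmem hz',
    cadetDepth_cadetAncestor hb]
  refine sum_congr rfl fun a _ => ?_
  rw [sdiff_sdiff_left, sup_eq_union, cadetSegment_cadetAncestor, ← image_union, range_eq_Ico,
    Ico_union_Ico_eq_Ico (by omega) (by omega), ← range_eq_Ico]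

theorem exists_contrib_sdiff_cadetAncestors_eq (S : Fin n → Fin n → Finset ℤ)
    {X : Finset (Fin n)} (hX : T.CadetClosed X) {u : Fin n} (hu : u ∈ X)
    (hz : ∀ z, T.IsCadet u z → z ∉ X) {b : ℕ} (hb : b ≤ T.cadetDepth u) :
    ∃ M ≤ T.cadetDepth u - b, contrib S T (X \ (range b).image (T.cadetAncestor u)) =
      ∑ a ∈ range (M + 1),
        (-1) ^ a * contrib S T (X \ (range (b + a + 1)).image (T.cadetAncestor u)) := by
  obtain ⟨M, hM, hfilter⟩ := exists_filter_range_eq_range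
    (P := fun a => IsSBox S T (T.cadetSegment (T.cadetAncestor u b) a))
    (by simpa only [cadetSegment_zero] using isSBox_singleton S T _)
    fun a ha h a' ha' => h.of_cadetSegment_le (by rwa [cadetDepth_cadetAncestor hb]) ha'
  exact ⟨M, hM, by rw [contrib_sdiff_cadetAncestors S hX hu hz hb, ← sum_filter, hfilter]⟩

theorem contrib_mem_of_cadetClosed (S : Fin n → Fin n → Finset ℤ) {X : Finset (Fin n)}
    (hX : T.CadetClosed X) : contrib S T X ∈ ({-1, 0, 1} : Set ℤ) := by
  induction X using Finset.strongInduction with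
  | H X ih =>
    rcases X.eq_empty_or_nonempty with rfl | hne
    · simp [contrib_empty]
    obtain ⟨u, hu, hmax⟩ := exists_max_image X T.depth hne
    have hz : ∀ z, T.IsCadet u z → z ∉ X := fun z hzu hzX => by
      have := hmax z hzX
      have := hzu.1.depth_eq
      omega
    set R := T.cadetDepth u
    choose! M hM hrec using fun b (hb : b ≤ R) =>
      exists_contrib_sdiff_cadetAncestors_eq S hX hu hz hb
    have hrest : contrib S T (X \ (range (R + 1)).image (T.cadetAncestor u)) ∈
        ({-1, 0, 1} : Set ℤ) :=
      ih _ (sdiff_ssubset (hX.cadetSegment_subset hu R) ⟨u, self_mem_cadetSegment u R⟩)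
        (hX.sdiff_cadetAncestors hz le_rfl)
    have key := mem_of_alternating_recursion (fun b hb => by have := hM b hb; omega) hrec
    simp only [range_zero, image_empty, sdiff_empty, Set.mem_insert_iff,
      Set.mem_singleton_iff] at key hrest ⊢
    omega

end Contribution

/-- Theorem A: for an arbitrary deformation of the braid arrangement,
the contribution of any tree `T ∈ T^(m)(n)` is `0` or `±1`. -/
theorem statement_19 {n : ℕ} (S : Fin n → Fin n → Finset ℤ) (T : PlaneTree n (mOf S)) :
    treeContrib S T ∈ ({-1, 0, 1} : Set ℤ) :=
  contrib_mem_of_cadetClosed S fun x _ _ _ => mem_univ x
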